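/- For every n̄-admissible collection 𝐦 the following identity of rational functions holds: ∏_{j=1}^{N−3} Z_{m̄^j}(𝐦̄^{j−1}) · ∏_{j=1}^{N−2} Y^{(j)}(𝐦̄^{j−1}; m̄^j) = ∏_{a=2}^{N−1} ∏_{b=1}^{a−1} ∏_{ℓ=0}^{m^b_a−1} [ (t^a_{𝐦^b_a−ℓ}/t^{a−1}_{𝐦^b_{a−1}−ℓ}) / (1 − t^a_{𝐦^b_a−ℓ}/t^{a−1}_{𝐦^b_{a−1}−ℓ}) · ∏_{ℓ′=𝐦^b_{a−1}−ℓ+1}^{n_{a−1}} (q⁻¹ − q·t^a_{𝐦^b_a−ℓ}/t^{a−1}_{ℓ′}) / (1 − t^a_{𝐦^b_a−ℓ}/t^{a−1}_{ℓ′}) ]. -/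
import Mathlib


open scoped BigOperators
open MvPolynomial

noncomputable section

/-- The base field `ℂ(q)`. -/
abbrev F0 : Type := RatFunc ℂ

/-- The field `K` of rational functions over `ℂ(q)` in the variables `t^a_ℓ`,
indexed by pairs `(a, ℓ) : ℕ × ℕ`. -/
abbrev K2 : Type := FractionRing (MvPolynomial (ℕ × ℕ) F0)

/-- The element `q` of `K`. -/
def q2 : K2 := algebraMap (MvPolynomial (ℕ × ℕ) F0) _ (C RatFunc.X)

/-- The variable `t^a_ℓ`. -/
def tV (a ℓ : ℕ) : K2 := algebraMap (MvPolynomial (ℕ × ℕ) F0) _ (X (a, ℓ))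

/-- The interval `{lo+1, …, lo+k} ⊆ ℕ` identified with `Fin k`. -/
def intervalEquiv (lo k : ℕ) : Fin k ≃ {x : ℕ // lo + 1 ≤ x ∧ x < lo + 1 + k} where
  toFun i := ⟨lo + 1 + (i : ℕ), ⟨Nat.le_add_right _ _, by have := i.isLt; omega⟩⟩
  invFun x := ⟨(x : ℕ) - (lo + 1), by have := x.2; omega⟩
  left_inv i := Fin.ext (by simp)
  right_inv x := Subtype.ext (by have := x.2; simp; omega)

/-- The permutation of `ℕ` acting as `σ` on the interval `{lo+1,…,lo+k}`
(sending `lo+1+i ↦ lo+1+σ(i)`) and as the identity elsewhere. -/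
def intervalPerm (lo k : ℕ) (σ : Equiv.Perm (Fin k)) : Equiv.Perm ℕ :=
  σ.extendDomain (intervalEquiv lo k)

/-- The permutation of the variable indices permuting the second component of
variables of type `a` by `intervalPerm lo k σ`, fixing all other variables. -/
def blockPerm (a lo k : ℕ) (σ : Equiv.Perm (Fin k)) : Equiv.Perm (ℕ × ℕ) :=
  Equiv.prodShear (Equiv.refl ℕ)
    (fun b => if b = a then intervalPerm lo k σ else Equiv.refl ℕ)

/-- The substitution field automorphism of `K` induced by a permutation
of the variable indices. -/
def liftP (e : Equiv.Perm (ℕ × ℕ)) : K2 ≃+* K2 :=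
  IsFractionRing.ringEquivOfRingEquiv (MvPolynomial.renameEquiv F0 e).toRingEquiv

/-- The q-symmetrization over the group of variables `t^a_ℓ`, `lo < ℓ ≤ lo + k`. -/
def symBlock (a lo k : ℕ) (G : K2) : K2 :=
  ∑ σ : Equiv.Perm (Fin k),
    (∏ p ∈ Finset.univ.filter
        (fun p : Fin k × Fin k => p.1 < p.2 ∧ σ p.2 < σ p.1),
      (q2 * tV a (lo + 1 + (σ p.2 : ℕ)) - q2⁻¹ * tV a (lo + 1 + (σ p.1 : ℕ))) /
        (q2⁻¹ * tV a (lo + 1 + (σ p.2 : ℕ)) - q2 * tV a (lo + 1 + (σ p.1 : ℕ)))) *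
      liftP (blockPerm a lo k σ) G

/-- `U(x₁,…,x_k; y₁,…,y_k) = ∏_i (y_i/x_i)/(1−y_i/x_i) ·
∏_{m<n} (q⁻¹ − q·y_m/x_n)/(1 − y_m/x_n)` (for `1`-based families `x y : ℕ → K`). -/
def Ub (x y : ℕ → K2) (k : ℕ) : K2 :=
  (∏ i ∈ Finset.range k, (y (i + 1) / x (i + 1)) / (1 - y (i + 1) / x (i + 1))) *
    ∏ p ∈ (Finset.range k ×ˢ Finset.range k).filter (fun p => p.1 < p.2),
      (q2⁻¹ - q2 * y (p.1 + 1) / x (p.2 + 1)) / (1 - y (p.1 + 1) / x (p.2 + 1))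

/-- `𝐦^j_a = m^1_a + ⋯ + m^j_a` (with `𝐦^0_a = 0`). -/
def Mm (mm : ℕ → ℕ → ℕ) (j a : ℕ) : ℕ := ∑ b ∈ Finset.Icc 1 j, mm b a

/-- `Z_{m̄^j}(𝐦̄^{j−1})`. -/
def Zrow (N : ℕ) (n : ℕ → ℕ) (mm : ℕ → ℕ → ℕ) (j : ℕ) : K2 :=
  ∏ a ∈ Finset.Icc 1 (N - 2),
    ∏ ℓ ∈ Finset.Icc (Mm mm (j - 1) a + mm j a + 1) (n a),
      ∏ ℓ' ∈ Finset.Icc (Mm mm (j - 1) (a + 1) + 1) (Mm mm (j - 1) (a + 1) + mm j (a + 1)),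
        (q2⁻¹ - q2 * tV (a + 1) ℓ' / tV a ℓ) / (1 - tV (a + 1) ℓ' / tV a ℓ)

/-- `Y^{(j)}(𝐦̄^{j−1}; m̄^j)`. -/
def Yrow (N : ℕ) (mm : ℕ → ℕ → ℕ) (j : ℕ) : K2 :=
  ∏ a ∈ Finset.Icc (j + 1) (N - 1),
    Ub (fun i => tV (a - 1) (Mm mm (j - 1) (a - 1) + mm j (a - 1) - mm j a + i))
      (fun i => tV a (Mm mm (j - 1) a + i)) (mm j a)

private lemma IccIoc (a b : ℕ) : Finset.Icc (a + 1) b = Finset.Ioc a b := by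
  ext x; simp only [Finset.mem_Icc, Finset.mem_Ioc]; omega

private lemma Mm_succ (mm : ℕ → ℕ → ℕ) (b a : ℕ) :
    Mm mm (b + 1) a = Mm mm b a + mm (b + 1) a := by
  rw [Mm, Mm, Finset.sum_Icc_succ_top (by omega)]

/-- The inner double product on the right-hand side, for a fixed pair `(a, b)`. -/
private def Pab (n : ℕ → ℕ) (mm : ℕ → ℕ → ℕ) (a b : ℕ) : K2 :=
  ∏ ℓ ∈ Finset.range (mm b a),
    ((tV a (Mm mm b a - ℓ) / tV (a - 1) (Mm mm b (a - 1) - ℓ)) /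
        (1 - tV a (Mm mm b a - ℓ) / tV (a - 1) (Mm mm b (a - 1) - ℓ))) *
      ∏ ℓ' ∈ Finset.Icc (Mm mm b (a - 1) - ℓ + 1) (n (a - 1)),
        (q2⁻¹ - q2 * tV a (Mm mm b a - ℓ) / tV (a - 1) ℓ') /
          (1 - tV a (Mm mm b a - ℓ) / tV (a - 1) ℓ')

private lemma pair_lemma (A nA M M' k kA Mp : ℕ) (hk : k ≤ kA) (hMn : M ≤ nA)
    (hMp : Mp + kA = M) :
    (∏ ℓ ∈ Finset.Icc (M + 1) nA, ∏ ℓ' ∈ Finset.Icc (M' + 1) (M' + k),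
        (q2⁻¹ - q2 * tV (A + 1) ℓ' / tV A ℓ) / (1 - tV (A + 1) ℓ' / tV A ℓ)) *
      Ub (fun i => tV A (Mp + kA - k + i)) (fun i => tV (A + 1) (M' + i)) k =
    ∏ ℓ ∈ Finset.range k,
      ((tV (A + 1) (M' + k - ℓ) / tV A (M - ℓ)) /
          (1 - tV (A + 1) (M' + k - ℓ) / tV A (M - ℓ))) *
        ∏ ℓ' ∈ Finset.Icc (M - ℓ + 1) nA,
          (q2⁻¹ - q2 * tV (A + 1) (M' + k - ℓ) / tV A ℓ') /
            (1 - tV (A + 1) (M' + k - ℓ) / tV A ℓ') := by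
  have hRHS : ∀ ℓ ∈ Finset.range k,
      ((tV (A + 1) (M' + k - ℓ) / tV A (M - ℓ)) /
          (1 - tV (A + 1) (M' + k - ℓ) / tV A (M - ℓ))) *
        ∏ ℓ' ∈ Finset.Icc (M - ℓ + 1) nA,
          (q2⁻¹ - q2 * tV (A + 1) (M' + k - ℓ) / tV A ℓ') /
            (1 - tV (A + 1) (M' + k - ℓ) / tV A ℓ')
      = (((tV (A + 1) (M' + k - ℓ) / tV A (M - ℓ)) /
          (1 - tV (A + 1) (M' + k - ℓ) / tV A (M - ℓ))) *
        ∏ ℓ' ∈ Finset.Ioc (M - ℓ) M,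
          (q2⁻¹ - q2 * tV (A + 1) (M' + k - ℓ) / tV A ℓ') /
            (1 - tV (A + 1) (M' + k - ℓ) / tV A ℓ')) *
        ∏ ℓ' ∈ Finset.Ioc M nA,
          (q2⁻¹ - q2 * tV (A + 1) (M' + k - ℓ) / tV A ℓ') /
            (1 - tV (A + 1) (M' + k - ℓ) / tV A ℓ') := by
    intro ℓ hℓ
    rw [Finset.mem_range] at hℓ
    rw [IccIoc, ← Finset.prod_Ioc_consecutive _ (show M - ℓ ≤ M by omega) hMn, mul_assoc]
  rw [Finset.prod_congr rfl hRHS, Finset.prod_mul_distrib, Finset.prod_mul_distrib]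
  have e_diag : (∏ i ∈ Finset.range k,
        (tV (A + 1) (M' + (i + 1)) / tV A (Mp + kA - k + (i + 1))) /
          (1 - tV (A + 1) (M' + (i + 1)) / tV A (Mp + kA - k + (i + 1))))
      = ∏ ℓ ∈ Finset.range k,
        (tV (A + 1) (M' + k - ℓ) / tV A (M - ℓ)) /
          (1 - tV (A + 1) (M' + k - ℓ) / tV A (M - ℓ)) := by
    refine Finset.prod_nbij' (fun i => k - 1 - i) (fun ℓ => k - 1 - ℓ) ?_ ?_ ?_ ?_ ?_ <;>
      simp only [Finset.mem_range]
    · intro i hi; omega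
    · intro i hi; omega
    · intro i hi; omega
    · intro i hi; omega
    · intro i hi
      rw [show M' + k - (k - 1 - i) = M' + (i + 1) by omega,
          show M - (k - 1 - i) = Mp + kA - k + (i + 1) by omega]
  have e_off : (∏ p ∈ (Finset.range k ×ˢ Finset.range k).filter (fun p => p.1 < p.2),
        (q2⁻¹ - q2 * tV (A + 1) (M' + (p.1 + 1)) / tV A (Mp + kA - k + (p.2 + 1))) /
          (1 - tV (A + 1) (M' + (p.1 + 1)) / tV A (Mp + kA - k + (p.2 + 1))))
      = ∏ ℓ ∈ Finset.range k, ∏ ℓ' ∈ Finset.Ioc (M - ℓ) M,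
        (q2⁻¹ - q2 * tV (A + 1) (M' + k - ℓ) / tV A ℓ') /
          (1 - tV (A + 1) (M' + k - ℓ) / tV A ℓ') := by
    rw [Finset.prod_sigma']
    refine Finset.prod_nbij'
      (fun p : ℕ × ℕ => (⟨k - 1 - p.1, M - k + p.2 + 1⟩ : (_ : ℕ) × ℕ))
      (fun s => (k - 1 - s.1, s.2 - (M - k) - 1)) ?_ ?_ ?_ ?_ ?_
    · rintro ⟨p1, p2⟩ hp
      simp only [Finset.mem_filter, Finset.mem_product, Finset.mem_range] at hp
      simp only [Finset.mem_sigma, Finset.mem_range, Finset.mem_Ioc]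
      omega
    · rintro ⟨s1, s2⟩ hs
      simp only [Finset.mem_sigma, Finset.mem_range, Finset.mem_Ioc] at hs
      simp only [Finset.mem_filter, Finset.mem_product, Finset.mem_range]
      omega
    · rintro ⟨p1, p2⟩ hp
      simp only [Finset.mem_filter, Finset.mem_product, Finset.mem_range] at hp
      simp only [Prod.mk.injEq]
      omega
    · rintro ⟨s1, s2⟩ hs
      simp only [Finset.mem_sigma, Finset.mem_range, Finset.mem_Ioc] at hs
      dsimp only
      rw [show k - 1 - (k - 1 - s1) = s1 by omega,
          show M - k + (s2 - (M - k) - 1) + 1 = s2 by omega]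
    · rintro ⟨p1, p2⟩ hp
      simp only [Finset.mem_filter, Finset.mem_product, Finset.mem_range] at hp
      dsimp only
      rw [show M' + k - (k - 1 - p1) = M' + (p1 + 1) by omega,
          show M - k + p2 + 1 = Mp + kA - k + (p2 + 1) by omega]
  have e_Z : (∏ ℓ ∈ Finset.Icc (M + 1) nA, ∏ ℓ' ∈ Finset.Icc (M' + 1) (M' + k),
        (q2⁻¹ - q2 * tV (A + 1) ℓ' / tV A ℓ) / (1 - tV (A + 1) ℓ' / tV A ℓ))
      = ∏ ℓ ∈ Finset.range k, ∏ ℓ' ∈ Finset.Ioc M nA,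
        (q2⁻¹ - q2 * tV (A + 1) (M' + k - ℓ) / tV A ℓ') /
          (1 - tV (A + 1) (M' + k - ℓ) / tV A ℓ') := by
    rw [IccIoc, Finset.prod_comm]
    refine Finset.prod_nbij' (fun u => M' + k - u) (fun v => M' + k - v) ?_ ?_ ?_ ?_ ?_ <;>
      simp only [Finset.mem_Icc, Finset.mem_range]
    · intro u hu; omega
    · intro u hu; omega
    · intro u hu; omega
    · intro u hu; omega
    · intro u hu
      rw [show M' + k - (M' + k - u) = u by omega]
  simp only [Ub]
  rw [e_diag, e_off, e_Z]
  exact mul_comm _ _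

private lemma Zrow_shift (N : ℕ) (n : ℕ → ℕ) (mm : ℕ → ℕ → ℕ)
    (hzero : ∀ b a, a < b → mm b a = 0)
    (hsum : ∀ a, 1 ≤ a → a ≤ N - 1 → n a = ∑ b ∈ Finset.Icc 1 a, mm b a)
    (c : ℕ) (hb : c + 1 ≤ N - 2) :
    Zrow N n mm (c + 1) = ∏ a ∈ Finset.Icc (c + 2) (N - 1),
      ∏ ℓ ∈ Finset.Icc (Mm mm c (a - 1) + mm (c + 1) (a - 1) + 1) (n (a - 1)),
        ∏ ℓ' ∈ Finset.Icc (Mm mm c a + 1) (Mm mm c a + mm (c + 1) a),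
          (q2⁻¹ - q2 * tV a ℓ' / tV (a - 1) ℓ) / (1 - tV a ℓ' / tV (a - 1) ℓ) := by
  rw [Zrow]
  simp only [Nat.add_sub_cancel]
  refine ((Finset.prod_subset (Finset.Icc_subset_Icc_left (show 1 ≤ c + 1 by omega))
    ?_).symm).trans ?_
  · intro a ha hna
    rw [Finset.mem_Icc] at ha
    rw [Finset.mem_Icc] at hna
    by_cases h1 : a + 1 ≤ c
    · refine Finset.prod_eq_one fun ℓ _ => ?_
      rw [hzero (c + 1) (a + 1) (by omega), Finset.Icc_eq_empty (by omega),
        Finset.prod_empty]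
    · have ha2 : a = c := by omega
      have h2 : mm (c + 1) c = 0 := hzero _ _ (by omega)
      have h3 : n c = Mm mm c c := by rw [hsum c (by omega) (by omega)]; rfl
      subst ha2
      rw [Finset.Icc_eq_empty (by omega), Finset.prod_empty]
  · refine Finset.prod_nbij' (fun a => a + 1) (fun a => a - 1) ?_ ?_ ?_ ?_ ?_ <;>
      simp only [Finset.mem_Icc]
    · intro a ha; omega
    · intro a ha; omega
    · intro a ha; omega
    · intro a ha; omega
    · intro a ha
      simp only [Nat.add_sub_cancel]

private lemma row_eq (N : ℕ) (hN : 3 ≤ N) (n : ℕ → ℕ) (mm : ℕ → ℕ → ℕ)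
    (hzero : ∀ b a, a < b → mm b a = 0)
    (hmono : ∀ b a, 1 ≤ b → b ≤ a → a < N → mm b (a + 1) ≤ mm b a)
    (hsum : ∀ a, 1 ≤ a → a ≤ N - 1 → n a = ∑ b ∈ Finset.Icc 1 a, mm b a)
    (c : ℕ) (hb : c + 1 ≤ N - 2) :
    Zrow N n mm (c + 1) * Yrow N mm (c + 1)
      = ∏ a ∈ Finset.Icc (c + 2) (N - 1), Pab n mm a (c + 1) := by
  rw [Zrow_shift N n mm hzero hsum c hb, Yrow]
  simp only [Nat.add_sub_cancel]
  rw [show c + 1 + 1 = c + 2 from rfl, ← Finset.prod_mul_distrib]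
  refine Finset.prod_congr rfl fun a ha => ?_
  rw [Finset.mem_Icc] at ha
  obtain ⟨A, rfl⟩ : ∃ A, a = A + 1 := ⟨a - 1, by omega⟩
  simp only [Nat.add_sub_cancel]
  rw [Pab]
  simp only [Nat.add_sub_cancel]
  rw [Mm_succ mm c (A + 1), Mm_succ mm c A]
  have hk : mm (c + 1) (A + 1) ≤ mm (c + 1) A :=
    hmono (c + 1) A (by omega) (by omega) (by omega)
  have hMn : Mm mm c A + mm (c + 1) A ≤ n A := by
    have h3 : n A = ∑ b ∈ Finset.Icc 1 A, mm b A := hsum A (by omega) (by omega)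
    have h4 : Mm mm (c + 1) A ≤ ∑ b ∈ Finset.Icc 1 A, mm b A :=
      Finset.sum_le_sum_of_subset (Finset.Icc_subset_Icc_right (by omega))
    have h5 := Mm_succ mm c A
    omega
  exact pair_lemma A (n A) (Mm mm c A + mm (c + 1) A) (Mm mm c (A + 1))
    (mm (c + 1) (A + 1)) (mm (c + 1) A) (Mm mm c A) hk hMn rfl


theorem statement12 (N : ℕ) (hN : 3 ≤ N) (n : ℕ → ℕ) (mm : ℕ → ℕ → ℕ)
    (hzero : ∀ b a, a < b → mm b a = 0)
    (hmono : ∀ b a, 1 ≤ b → b ≤ a → a < N → mm b (a + 1) ≤ mm b a)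
    (hmN : ∀ b, mm b N = 0)
    (hsum : ∀ a, 1 ≤ a → a ≤ N - 1 → n a = ∑ b ∈ Finset.Icc 1 a, mm b a) :
    (∏ j ∈ Finset.Icc 1 (N - 3), Zrow N n mm j) * ∏ j ∈ Finset.Icc 1 (N - 2), Yrow N mm j =
      ∏ a ∈ Finset.Icc 2 (N - 1), ∏ b ∈ Finset.Icc 1 (a - 1), ∏ ℓ ∈ Finset.range (mm b a),
        ((tV a (Mm mm b a - ℓ) / tV (a - 1) (Mm mm b (a - 1) - ℓ)) /
            (1 - tV a (Mm mm b a - ℓ) / tV (a - 1) (Mm mm b (a - 1) - ℓ))) *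
          ∏ ℓ' ∈ Finset.Icc (Mm mm b (a - 1) - ℓ + 1) (n (a - 1)),
            (q2⁻¹ - q2 * tV a (Mm mm b a - ℓ) / tV (a - 1) ℓ') /
              (1 - tV a (Mm mm b a - ℓ) / tV (a - 1) ℓ') := by
  have hZlast : Zrow N n mm (N - 2) = 1 := by
    rw [Zrow]
    refine Finset.prod_eq_one fun a ha => ?_
    rw [Finset.mem_Icc] at ha
    by_cases h1 : a + 1 < N - 2
    · refine Finset.prod_eq_one fun ℓ _ => ?_
      rw [hzero (N - 2) (a + 1) h1, Finset.Icc_eq_empty (by omega), Finset.prod_empty]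
    · have h3 : n a = Mm mm a a := by rw [hsum a (by omega) (by omega)]; rfl
      have hlt : ¬(Mm mm (N - 2 - 1) a + mm (N - 2) a + 1 ≤ n a) := by
        rcases (show (a = N - 3 ∧ 4 ≤ N) ∨ a = N - 2 by omega) with ⟨h, h4⟩ | h
        · subst h
          have h5 : mm (N - 2) (N - 3) = 0 := hzero _ _ (by omega)
          rw [show N - 2 - 1 = N - 3 by omega]
          omega
        · subst h
          have h6 := Mm_succ mm (N - 2 - 1) (N - 2)
          rw [show N - 2 - 1 + 1 = N - 2 by omega] at h6
          omega
      rw [Finset.Icc_eq_empty hlt, Finset.prod_empty]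
  have e0 : (∏ j ∈ Finset.Icc 1 (N - 3), Zrow N n mm j)
      = ∏ j ∈ Finset.Icc 1 (N - 2), Zrow N n mm j := by
    rw [show N - 2 = N - 3 + 1 by omega, Finset.prod_Icc_succ_top (by omega),
      show N - 3 + 1 = N - 2 by omega, hZlast, mul_one]
  rw [e0, ← Finset.prod_mul_distrib]
  have e1 : ∀ b ∈ Finset.Icc 1 (N - 2), Zrow N n mm b * Yrow N mm b
      = ∏ a ∈ Finset.Icc (b + 1) (N - 1), Pab n mm a b := by
    intro b hb
    rw [Finset.mem_Icc] at hb
    obtain ⟨c, rfl⟩ : ∃ c, b = c + 1 := ⟨b - 1, by omega⟩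
    rw [show c + 1 + 1 = c + 2 from rfl]
    exact row_eq N hN n mm hzero hmono hsum c hb.2
  rw [Finset.prod_congr rfl e1]
  rw [Finset.prod_comm' (t' := Finset.Icc 2 (N - 1)) (s' := fun a => Finset.Icc 1 (a - 1))
    (fun b a => by simp only [Finset.mem_Icc]; omega)]
  rfl
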